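/- arXiv:1407.4097 — 2 statements merged into one kernel-verified Lean document; each statement's English description precedes it below -/
import Mathlib

section
/- Let μ be a nontrivial symmetric weakly stable probability measure on ℝ and p ∈ (0,2]. Suppose λ and ν are probability measures on ℝ, both ≠ δ_0 and both concentrated on [0,∞), each satisfying (T_a(μ∘ρ)) ∗ (T_b(μ∘ρ)) = T_{(a^p+b^p)^{1/p}}(μ∘ρ) for all a, b > 0 (with ρ = λ and ρ = ν respectively). Then there exist positive constants a, b such that μ∘λ = T_a γ and μ∘ν = T_b γ, where γ has characteristic function exp(−|t|^p), and T_{1/a} λ = T_{1/b} ν; in particular ν = T_c λ for some c > 0. -/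
open MeasureTheory Filter Topology ENNReal BoundedContinuousFunction

noncomputable section

/-- `T_c μ`: pushforward of `μ` under `x ↦ c * x`. -/
def rescale (c : ℝ) (μ : Measure ℝ) : Measure ℝ := μ.map (fun x => c * x)

/-- Scale mixture `μ ∘ ν`: pushforward of `μ × ν` under `(x, s) ↦ x * s`. -/
def mix (μ ν : Measure ℝ) : Measure ℝ := (μ.prod ν).map (fun p => p.1 * p.2)

/-- Convolution of two measures on `ℝ`. -/
def mconv (μ ν : Measure ℝ) : Measure ℝ := (μ.prod ν).map (fun p => p.1 + p.2)

/-- `n`-fold convolution power, with the convention that the 0th power is `δ_0`. -/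
def convPow (μ : Measure ℝ) : ℕ → Measure ℝ
  | 0 => Measure.dirac 0
  | n + 1 => mconv (convPow μ n) μ

/-- A probability measure `μ` on `ℝ` is weakly stable if for all `a b : ℝ` there is a
probability measure `lam` with `(T_a μ) ∗ (T_b μ) = μ ∘ lam`. -/
def WeaklyStable (μ : Measure ℝ) : Prop :=
  ∀ a b : ℝ, ∃ lam : Measure ℝ, IsProbabilityMeasure lam ∧
    mconv (rescale a μ) (rescale b μ) = mix μ lam

/-- `μ` is nontrivial: it has no atoms. -/
def NontrivialMeasure (μ : Measure ℝ) : Prop := ∀ x : ℝ, μ {x} = 0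

/-- `μ` is symmetric: `T_{-1} μ = μ`. -/
def SymmetricMeasure (μ : Measure ℝ) : Prop := rescale (-1) μ = μ

/-- `lam` is `μ`-weakly infinitely divisible: for every `n ≥ 1` there is a probability
measure `ν` concentrated on `[0, ∞)` with `(μ ∘ ν)^{∗ n} = μ ∘ lam`. -/
def MuWeaklyInfDiv (μ lam : Measure ℝ) : Prop :=
  ∀ n : ℕ, 1 ≤ n → ∃ ν : Measure ℝ, IsProbabilityMeasure ν ∧ ν (Set.Iio 0) = 0 ∧
    convPow (mix μ ν) n = mix μ lam

/-- Characteristic function of a measure on `ℝ`. -/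
def charFun' (μ : Measure ℝ) (t : ℝ) : ℂ := ∫ x, Complex.exp (t * x * Complex.I) ∂μ

/-- Weak convergence of a sequence of measures on `ℝ`. -/
def WeakTendsto (μs : ℕ → Measure ℝ) (μ : Measure ℝ) : Prop :=
  ∀ f : ℝ →ᵇ ℝ, Tendsto (fun n => ∫ x, f x ∂(μs n)) atTop (𝓝 (∫ x, f x ∂μ))

/-- A convolution semigroup family for `(μ, lam)`. -/
def ConvSemigroupFamily (μ lam : Measure ℝ) (L : ℝ → Measure ℝ) : Prop :=
  (∀ r : ℝ, 0 ≤ r → IsProbabilityMeasure (L r)) ∧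
  L 0 = Measure.dirac 0 ∧ L 1 = lam ∧
  (∀ r s : ℝ, 0 ≤ r → 0 ≤ s → mconv (mix μ (L r)) (mix μ (L s)) = mix μ (L (r + s))) ∧
  (∀ f : ℝ →ᵇ ℝ, Tendsto (fun r => ∫ x, f x ∂(L r)) (𝓝[>] (0 : ℝ)) (𝓝 (f 0)))

/-- `C_#`: bounded continuous functions vanishing on a neighborhood of `0`. -/
def CSharp (f : ℝ →ᵇ ℝ) : Prop := ∃ ε > (0 : ℝ), ∀ x : ℝ, |x| < ε → f x = 0

/-- `κ(μ) = sup {p ∈ [0,2] : ∫ |x|^p μ(dx) < ∞}` (with `sup ∅ = 0` in `ℝ`). -/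
def kappa (μ : Measure ℝ) : ℝ :=
  sSup {p : ℝ | p ∈ Set.Icc (0 : ℝ) 2 ∧ ∫⁻ x, ENNReal.ofReal (|x| ^ p) ∂μ < ∞}

/-!
The characteristic function `φ` of `μ ∘ λ` is real and even because `μ` is symmetric, and the
stability relation reads `φ a * φ b = φ ((a ^ p + b ^ p) ^ (1 / p))`. Hence `g u = φ (u ^ (1 / p))`
is continuous with `g (u + v) = g u * g v` on `(0, ∞)`, so `φ t = exp (-|a t| ^ p)`; here `a > 0` because
`μ` has no atom at `0` and `λ ≠ δ₀`. After rescaling, `μ ∘ λ' = μ ∘ ν' = γ` with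
`γ̂ t = exp (-|t| ^ p)`, and Fubini for `γ ∘ λ' ∘ ν'` gives `∫ γ̂ (t s) dν' = ∫ γ̂ (t s) dλ'`:
the images of `λ'` and `ν'` under `s ↦ s ^ p` have the same Laplace transform, so `λ' = ν'`.
-/

open ProbabilityTheory

lemma eq_mul_of_map_add_of_continuousOn {f : ℝ → ℝ} (hf : ContinuousOn f (Set.Ioi 0))
    (hadd : ∀ u v, 0 < u → 0 < v → f (u + v) = f u + f v) {u : ℝ} (hu : 0 < u) :
    f u = u * f 1 := by
  have hdiff : ∀ a b c d, 0 < a → 0 < b → 0 < c → 0 < d → a - b = c - d →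
      f a - f b = f c - f d := by
    intro a b c d ha hb hc hd h
    have := hadd a d ha hd
    have := hadd c b hc hb
    rw [show a + d = c + b by linarith] at *
    linarith
  have hpos : ∀ x : ℝ, 0 < x + |x| + 1 := fun x => by linarith [neg_abs_le x]
  -- `F x = f a - f b` for any `a, b > 0` with `a - b = x`: the additive extension of `f` to `ℝ`
  let F : ℝ →+ ℝ :=
    { toFun := fun x => f (x + |x| + 1) - f (|x| + 1)
      map_zero' := by simp
      map_add' := fun x y => by
        have := hadd _ _ (hpos x) (hpos y)
        have := hadd (|x| + 1) (|y| + 1) (by positivity) (by positivity)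
        have := hdiff (x + y + |x + y| + 1) (|x + y| + 1) (x + |x| + 1 + (y + |y| + 1))
          (|x| + 1 + (|y| + 1)) (hpos _) (by positivity) (add_pos (hpos x) (hpos y))
          (by positivity) (by ring)
        change f (x + y + |x + y| + 1) - f (|x + y| + 1)
          = (f (x + |x| + 1) - f (|x| + 1)) + (f (y + |y| + 1) - f (|y| + 1))
        linarith }
  have hF : ∀ x, 0 < x → F x = f x := fun x hx => by
    change f (x + |x| + 1) - f (|x| + 1) = f x
    rw [add_assoc, hadd x _ hx (by positivity)]
    ring
  have hFc : Continuous F :=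
    (hf.comp_continuous (by fun_prop) hpos).sub
      (hf.comp_continuous (by fun_prop) fun x => by simp only [Set.mem_Ioi]; positivity)
  calc f u = F (u • 1) := by rw [smul_eq_mul, mul_one, hF u hu]
    _ = u * f 1 := by rw [map_real_smul F hFc, hF 1 one_pos, smul_eq_mul]

lemma exists_eq_exp_mul_of_map_add {g : ℝ → ℝ} (hg : Continuous g) (hg0 : g 0 = 1)
    (hmul : ∀ u v, 0 < u → 0 < v → g (u + v) = g u * g v) :
    ∃ c : ℝ, ∀ u, 0 < u → g u = Real.exp (c * u) := by
  have hpow : ∀ (n : ℕ) (v : ℝ), 0 < v → g ((n + 1) * v) = g v ^ (n + 1) := by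
    intro n v hv
    induction n with
    | zero => simp
    | succ n ih =>
      push_cast
      rw [add_mul, one_mul, hmul _ _ (by positivity) hv, ih]
      ring
  have hpos : ∀ u, 0 < u → 0 < g u := by
    intro u hu
    have hnear : ∀ᶠ v in 𝓝 0, 0 < g v :=
      continuousAt_const.eventually_lt hg.continuousAt (by rw [hg0]; exact one_pos)
    have hsmall : Tendsto (fun n : ℕ => u * (1 / ((n : ℝ) + 1))) atTop (𝓝 0) := by
      simpa using tendsto_one_div_add_atTop_nhds_zero_nat.const_mul u
    obtain ⟨n, hn⟩ := (hsmall.eventually hnear).exists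
    have hu_eq : u = (n + 1) * (u * (1 / ((n : ℝ) + 1))) := by field_simp
    rw [hu_eq, hpow n _ (by positivity)]
    positivity
  have hlog : ∀ u, 0 < u → Real.log (g u) = u * Real.log (g 1) := fun u hu =>
    eq_mul_of_map_add_of_continuousOn (f := fun u => Real.log (g u))
      (hg.continuousOn.log fun v hv => (hpos v hv).ne') (fun u v hu hv => by
        rw [hmul u v hu hv, Real.log_mul (hpos u hu).ne' (hpos v hv).ne']) hu
  refine ⟨Real.log (g 1), fun u hu => ?_⟩
  rw [mul_comm, ← hlog u hu, Real.exp_log (hpos u hu)]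

lemma exists_eq_exp_mul_rpow_of_mul {f : ℝ → ℝ} {p : ℝ} (hp : 0 < p) (hf : Continuous f)
    (hf0 : f 0 = 1) (hmul : ∀ a b, 0 < a → 0 < b → f a * f b = f ((a ^ p + b ^ p) ^ (1 / p))) :
    ∃ c : ℝ, ∀ t, 0 < t → f t = Real.exp (c * t ^ p) := by
  obtain ⟨c, hc⟩ := exists_eq_exp_mul_of_map_add (g := fun u => f (u ^ p⁻¹))
    (hf.comp (Real.continuous_rpow_const (by positivity)))
    (by simp [Real.zero_rpow (inv_ne_zero hp.ne'), hf0]) (fun u v hu hv => by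
      rw [hmul _ _ (by positivity) (by positivity), Real.rpow_inv_rpow hu.le hp.ne',
        Real.rpow_inv_rpow hv.le hp.ne', one_div])
  refine ⟨c, fun t ht => ?_⟩
  rw [← hc _ (by positivity), Real.rpow_rpow_inv ht.le hp.ne']

section Laplace

variable {P : Measure ℝ} [IsFiniteMeasure P]

lemma integrable_exp_mul_of_nonneg (hP : ∀ᵐ x ∂P, 0 ≤ x) {t : ℝ} (ht : t ≤ 0) :
    Integrable (fun x => Real.exp (t * x)) P :=
  Integrable.of_bound (by fun_prop) 1 (hP.mono fun x hx => by
    rw [Real.norm_eq_abs, abs_of_pos (Real.exp_pos _), Real.exp_le_one_iff]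
    exact mul_nonpos_of_nonpos_of_nonneg ht hx)

lemma analyticOnNhd_complexMGF_of_nonneg (hP : ∀ᵐ x ∂P, 0 ≤ x) :
    AnalyticOnNhd ℂ (complexMGF id P) {z | z.re < 0} := by
  refine analyticOnNhd_complexMGF.mono fun z (hz : z.re < 0) => ?_
  have hsub : Set.Iio 0 ⊆ integrableExpSet id P := fun t ht =>
    integrable_exp_mul_of_nonneg hP (le_of_lt ht)
  exact interior_maximal hsub isOpen_Iio hz

lemma continuousOn_complexMGF_of_nonneg (hP : ∀ᵐ x ∂P, 0 ≤ x) :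
    ContinuousOn (complexMGF id P) {z | z.re ≤ 0} := by
  refine continuousOn_of_dominated (bound := fun _ => 1) (fun z _ => by fun_prop)
    (fun z (hz : z.re ≤ 0) => hP.mono fun x hx => ?_) (integrable_const 1)
    (ae_of_all _ fun x => by fun_prop)
  rw [Complex.norm_exp, Real.exp_le_one_iff]
  simpa using mul_nonpos_of_nonpos_of_nonneg hz hx

/- The Laplace transform extends analytically to `re z < 0` and continuously to the imaginary
axis, where it is the characteristic function. -/
lemma MeasureTheory.Measure.ext_of_complexMGF_eq_of_nonneg {Q : Measure ℝ} [IsFiniteMeasure Q]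
    (hP : ∀ᵐ x ∂P, 0 ≤ x) (hQ : ∀ᵐ x ∂Q, 0 ≤ x)
    (h : ∀ t : ℝ, t < 0 → complexMGF id P t = complexMGF id Q t) : P = Q := by
  have hneg : Set.EqOn (complexMGF id P) (complexMGF id Q) {z | z.re < 0} := by
    refine (analyticOnNhd_complexMGF_of_nonneg hP).eqOn_of_preconnected_of_frequently_eq
      (analyticOnNhd_complexMGF_of_nonneg hQ) (convex_halfSpace_re_lt 0).isPreconnected
      (z₀ := ((-1 : ℝ) : ℂ)) (by simp) ?_
    have hreal : ∃ᶠ t : ℝ in 𝓝[≠] (-1), complexMGF id P t = complexMGF id Q t :=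
      (eventually_nhdsWithin_of_eventually_nhds (eventually_lt_nhds (by norm_num))).frequently.mono
        fun t ht => h t ht
    exact (Complex.continuous_ofReal.continuousWithinAt.tendsto_nhdsWithin
      fun t ht => Complex.ofReal_injective.ne ht).frequently hreal
  have hnonpos := hneg.of_subset_closure (continuousOn_complexMGF_of_nonneg hP)
    (continuousOn_complexMGF_of_nonneg hQ) (fun z (hz : z.re < 0) => hz.le)
    (Complex.closure_setOfPred_re_lt 0).ge
  refine Measure.ext_of_charFun (funext fun t => ?_)
  rw [← complexMGF_id_mul_I, ← complexMGF_id_mul_I]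
  exact hnonpos (by simp)

end Laplace

lemma eq_of_map_rpow_eq {P Q : Measure ℝ} {p : ℝ} (hp : p ≠ 0) (hP : ∀ᵐ x ∂P, 0 ≤ x)
    (hQ : ∀ᵐ x ∂Q, 0 ≤ x) (h : P.map (· ^ p) = Q.map (· ^ p)) : P = Q := by
  have hinv : ∀ τ : Measure ℝ, (∀ᵐ x ∂τ, 0 ≤ x) → (τ.map (· ^ p)).map (· ^ p⁻¹) = τ := by
    intro τ hτ
    rw [Measure.map_map (by fun_prop) (by fun_prop)]
    conv_rhs => rw [← Measure.map_id (μ := τ)]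
    exact Measure.map_congr (hτ.mono fun x hx => Real.rpow_rpow_inv hx hp)
  rw [← hinv P hP, h, hinv Q hQ]

lemma charFun'_eq_charFun (m : Measure ℝ) : charFun' m = charFun m := by
  ext t
  rw [charFun', charFun_apply_real]

instance isProbabilityMeasure_rescale (c : ℝ) (m : Measure ℝ) [IsProbabilityMeasure m] :
    IsProbabilityMeasure (rescale c m) :=
  Measure.isProbabilityMeasure_map (by fun_prop)

instance isProbabilityMeasure_mix (m ρ : Measure ℝ) [IsProbabilityMeasure m]
    [IsProbabilityMeasure ρ] : IsProbabilityMeasure (mix m ρ) :=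
  Measure.isProbabilityMeasure_map (by fun_prop)

lemma rescale_rescale (a b : ℝ) (m : Measure ℝ) :
    rescale a (rescale b m) = rescale (a * b) m := by
  rw [rescale, rescale, rescale, Measure.map_map (by fun_prop) (by fun_prop)]
  congr 1
  ext x
  simp [mul_assoc]

lemma rescale_one (m : Measure ℝ) : rescale 1 m = m := by
  simp [rescale]

lemma rescale_mix (c : ℝ) (m ρ : Measure ℝ) [SFinite m] [SFinite ρ] :
    rescale c (mix m ρ) = mix m (rescale c ρ) := by
  have hprod : m.prod (rescale c ρ) = (m.prod ρ).map (Prod.map id (c * ·)) := by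
    rw [rescale, ← Measure.map_prod_map _ _ measurable_id (by fun_prop), Measure.map_id]
  rw [rescale, mix, mix, hprod, Measure.map_map (by fun_prop) (by fun_prop),
    Measure.map_map (by fun_prop) (by fun_prop)]
  congr 1
  ext q
  simp only [Function.comp, Prod.map, id]
  ring

lemma ae_nonneg_rescale {c : ℝ} (hc : 0 ≤ c) {ρ : Measure ℝ} (hρ : ρ (Set.Iio 0) = 0) :
    ∀ᵐ s ∂rescale c ρ, 0 ≤ s :=
  (ae_map_iff (by fun_prop) measurableSet_Ici).2 ((measure_eq_zero_iff_ae_notMem.1 hρ).mono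
    fun s hs => mul_nonneg hc (not_lt.1 hs))

lemma charFun_rescale (c t : ℝ) (m : Measure ℝ) :
    charFun (rescale c m) t = charFun m (c * t) :=
  charFun_map_mul c t

lemma charFun_neg_of_symmetric {m : Measure ℝ} (hm : SymmetricMeasure m) (t : ℝ) :
    charFun m (-t) = charFun m t := by
  rw [← neg_one_mul, ← charFun_rescale, hm]

lemma charFun_mconv (m ρ : Measure ℝ) [IsFiniteMeasure m] [IsFiniteMeasure ρ] (t : ℝ) :
    charFun (mconv m ρ) t = charFun m t * charFun ρ t :=
  charFun_conv t

lemma charFun_mix (m ρ : Measure ℝ) [IsFiniteMeasure m] [IsFiniteMeasure ρ] (t : ℝ) :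
    charFun (mix m ρ) t = ∫ s, charFun m (t * s) ∂ρ := by
  rw [mix, charFun_apply_real, integral_map (by fun_prop) (by fun_prop), integral_prod_symm]
  · congr with s
    rw [charFun_apply_real]
    congr with x
    push_cast
    ring_nf
  · refine Integrable.of_bound (by fun_prop) 1 (ae_of_all _ fun q => ?_)
    rw [← Complex.ofReal_mul, Complex.norm_exp_ofReal_mul_I]

lemma integral_charFun_mix_mul_comm (m ρ σ : Measure ℝ) [IsProbabilityMeasure m]
    [IsFiniteMeasure ρ] [IsFiniteMeasure σ] (t : ℝ) :
    ∫ s, charFun (mix m ρ) (t * s) ∂σ = ∫ s, charFun (mix m σ) (t * s) ∂ρ := by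
  simp only [charFun_mix]
  rw [integral_integral_swap]
  · simp only [mul_right_comm t]
  · exact Integrable.of_bound (by fun_prop) 1 (ae_of_all _ fun q => norm_charFun_le_one _)

lemma eq_dirac_zero_of_mix_eq_dirac_zero {m ρ : Measure ℝ} [IsProbabilityMeasure m]
    [IsProbabilityMeasure ρ] (hm : m {0} = 0) (h : mix m ρ = Measure.dirac 0) :
    ρ = Measure.dirac 0 := by
  have hprod : ∀ᵐ q ∂m.prod ρ, q.1 * q.2 = 0 := by
    have hzero : ∀ᵐ y ∂mix m ρ, y = 0 := by
      rw [h]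
      exact (ae_dirac_iff (measurableSet_singleton (0 : ℝ))).2 rfl
    exact (ae_map_iff (by fun_prop) (measurableSet_singleton (0 : ℝ))).1 hzero
  obtain ⟨x, hx, hxρ⟩ := ((measure_eq_zero_iff_ae_notMem.1 hm).and
    (Measure.ae_ae_of_ae_prod hprod)).exists
  have hρ0 : ∀ᵐ s ∂ρ, s = 0 := hxρ.mono fun s hs => (mul_eq_zero.1 hs).resolve_left hx
  rw [← Measure.map_id (μ := ρ), Measure.map_congr (f := id) (g := fun _ => (0 : ℝ)) hρ0,
    Measure.map_const, measure_univ, one_smul]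

lemma exists_charFun_eq_exp_of_stable {m : Measure ℝ} [IsProbabilityMeasure m] {p : ℝ}
    (hp : 0 < p) (heven : ∀ t, charFun m (-t) = charFun m t)
    (hstab : ∀ a b : ℝ, 0 < a → 0 < b →
      mconv (rescale a m) (rescale b m) = rescale ((a ^ p + b ^ p) ^ (1 / p)) m) :
    ∃ c : ℝ, ∀ t, charFun m t = (Real.exp (c * |t| ^ p) : ℂ) := by
  have hreal : ∀ t, charFun m t = ((charFun m t).re : ℂ) := fun t =>
    (Complex.conj_eq_iff_re.1 (by rw [← charFun_neg, heven])).symm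
  obtain ⟨c, hc⟩ := exists_eq_exp_mul_rpow_of_mul (f := fun t => (charFun m t).re) hp
    (Complex.continuous_re.comp continuous_charFun) (by simp [charFun_zero]) fun a b ha hb => by
      have h := congrArg (charFun · 1) (hstab a b ha hb)
      simp only [charFun_mconv, charFun_rescale, mul_one] at h
      rw [hreal a, hreal b, hreal ((a ^ p + b ^ p) ^ (1 / p))] at h
      exact_mod_cast h
  refine ⟨c, fun t => ?_⟩
  rcases eq_or_ne t 0 with rfl | ht
  · simp [charFun_zero, Real.zero_rpow hp.ne']
  have habs : charFun m t = charFun m |t| := by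
    rcases abs_choice t with h | h <;> rw [h]
    exact (heven t).symm
  rw [habs, hreal, hc |t| (abs_pos.2 ht)]

lemma exists_charFun_mix_eq_exp_neg_rpow {μ ρ : Measure ℝ} [IsProbabilityMeasure μ]
    [IsProbabilityMeasure ρ] {p : ℝ} (hp : 0 < p) (hμ0 : μ {0} = 0) (hsym : SymmetricMeasure μ)
    (hρ : ρ ≠ Measure.dirac 0)
    (hstab : ∀ a b : ℝ, 0 < a → 0 < b → mconv (rescale a (mix μ ρ)) (rescale b (mix μ ρ))
      = rescale ((a ^ p + b ^ p) ^ (1 / p)) (mix μ ρ)) :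
    ∃ a : ℝ, 0 < a ∧ ∀ t, charFun (mix μ ρ) t = (Real.exp (-(|a * t| ^ p)) : ℂ) := by
  obtain ⟨c, hc⟩ := exists_charFun_eq_exp_of_stable hp (fun t => by
    simp only [charFun_mix, neg_mul, charFun_neg_of_symmetric hsym]) hstab
  have hc0 : c < 0 := by
    rcases lt_trichotomy c 0 with h | rfl | h
    · exact h
    · refine absurd (eq_dirac_zero_of_mix_eq_dirac_zero hμ0 (Measure.ext_of_charFun ?_)) hρ
      ext t
      simp [hc]
    · have : c ≤ 0 := by simpa [hc] using norm_charFun_le_one (μ := mix μ ρ) 1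
      linarith
  have ha : 0 < (-c) ^ p⁻¹ := Real.rpow_pos_of_pos (by linarith) _
  refine ⟨(-c) ^ p⁻¹, ha, fun t => ?_⟩
  rw [hc, abs_mul, abs_of_pos ha, Real.mul_rpow ha.le (abs_nonneg t),
    Real.rpow_inv_rpow (by linarith) hp.ne']
  ring_nf

lemma eq_of_mix_eq_of_charFun_eq_exp {μ ρ σ : Measure ℝ} [IsProbabilityMeasure μ]
    [IsProbabilityMeasure ρ] [IsProbabilityMeasure σ] {p : ℝ} (hp : 0 < p)
    (hρ : ∀ᵐ s ∂ρ, 0 ≤ s) (hσ : ∀ᵐ s ∂σ, 0 ≤ s)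
    (hγ : ∀ t, charFun (mix μ ρ) t = (Real.exp (-(|t| ^ p)) : ℂ)) (h : mix μ ρ = mix μ σ) :
    ρ = σ := by
  have hlaplace : ∀ τ : Measure ℝ, (∀ᵐ s ∂τ, 0 ≤ s) → ∀ u : ℝ, u < 0 →
      complexMGF id (τ.map (· ^ p)) u = ∫ s, charFun (mix μ ρ) ((-u) ^ p⁻¹ * s) ∂τ := by
    intro τ hτ u hu
    rw [complexMGF, integral_map (by fun_prop) (by fun_prop)]
    refine integral_congr_ae (hτ.mono fun s hs => ?_)
    have ht : 0 < (-u) ^ p⁻¹ := Real.rpow_pos_of_pos (neg_pos.2 hu) _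
    simp only [id]
    rw [hγ, abs_mul, abs_of_pos ht, abs_of_nonneg hs, Real.mul_rpow ht.le hs,
      Real.rpow_inv_rpow (by linarith) hp.ne']
    push_cast
    ring_nf
  have hmap : ∀ τ : Measure ℝ, (∀ᵐ s ∂τ, 0 ≤ s) → ∀ᵐ x ∂τ.map (· ^ p), 0 ≤ x := fun τ hτ =>
    (ae_map_iff (by fun_prop) measurableSet_Ici).2 (hτ.mono fun s hs => Real.rpow_nonneg hs p)
  refine eq_of_map_rpow_eq hp.ne' hρ hσ
    (Measure.ext_of_complexMGF_eq_of_nonneg (hmap ρ hρ) (hmap σ hσ) fun u hu => ?_)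
  rw [hlaplace ρ hρ u hu, hlaplace σ hσ u hu]
  conv_lhs => rw [h]
  exact integral_charFun_mix_mul_comm μ σ ρ _

theorem stmt6_general (μ : Measure ℝ) (hμ : IsProbabilityMeasure μ) (hnt : NontrivialMeasure μ)
    (hsym : SymmetricMeasure μ)
    (p : ℝ) (hp : p ∈ Set.Ioc (0 : ℝ) 2)
    (lam ν : Measure ℝ)
    (hlam : IsProbabilityMeasure lam) (hν : IsProbabilityMeasure ν)
    (hlamne : lam ≠ Measure.dirac 0) (hνne : ν ≠ Measure.dirac 0)
    (hlam0 : lam (Set.Iio 0) = 0) (hν0 : ν (Set.Iio 0) = 0)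
    (hstab1 : ∀ a b : ℝ, 0 < a → 0 < b →
      mconv (rescale a (mix μ lam)) (rescale b (mix μ lam))
        = rescale ((a ^ p + b ^ p) ^ (1 / p)) (mix μ lam))
    (hstab2 : ∀ a b : ℝ, 0 < a → 0 < b →
      mconv (rescale a (mix μ ν)) (rescale b (mix μ ν))
        = rescale ((a ^ p + b ^ p) ^ (1 / p)) (mix μ ν)) :
    ∃ γ : Measure ℝ, IsProbabilityMeasure γ ∧
      (∀ t : ℝ, charFun' γ t = (Real.exp (-(|t| ^ p)) : ℂ)) ∧
      ∃ a : ℝ, 0 < a ∧ ∃ b : ℝ, 0 < b ∧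
        mix μ lam = rescale a γ ∧ mix μ ν = rescale b γ ∧
        rescale (1 / a) lam = rescale (1 / b) ν ∧
        ∃ c : ℝ, 0 < c ∧ ν = rescale c lam := by
  obtain ⟨a, ha, hφa⟩ := exists_charFun_mix_eq_exp_neg_rpow hp.1 (hnt 0) hsym hlamne hstab1
  obtain ⟨b, hb, hφb⟩ := exists_charFun_mix_eq_exp_neg_rpow hp.1 (hnt 0) hsym hνne hstab2
  set γ := rescale (1 / a) (mix μ lam) with hγ_def
  have hγ : ∀ t, charFun γ t = (Real.exp (-(|t| ^ p)) : ℂ) := fun t => by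
    rw [charFun_rescale, hφa, ← mul_assoc, mul_one_div_cancel ha.ne', one_mul]
  have hlamγ : mix μ lam = rescale a γ := by
    rw [rescale_rescale, mul_one_div_cancel ha.ne', rescale_one]
  have hνγ : mix μ ν = rescale b γ :=
    Measure.ext_of_charFun (funext fun t => by rw [hφb, charFun_rescale, hγ])
  have hscaled : rescale (1 / a) lam = rescale (1 / b) ν := by
    refine eq_of_mix_eq_of_charFun_eq_exp (μ := μ) hp.1 (ae_nonneg_rescale (by positivity) hlam0)
      (ae_nonneg_rescale (by positivity) hν0) (fun t => ?_) ?_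
    · rw [← rescale_mix, ← hγ_def, hγ]
    · rw [← rescale_mix, ← rescale_mix, hνγ, rescale_rescale, one_div_mul_cancel hb.ne',
        rescale_one]
  refine ⟨γ, inferInstance, fun t => by rw [charFun'_eq_charFun, hγ], a, ha, b, hb, hlamγ, hνγ,
    hscaled, b / a, div_pos hb ha, ?_⟩
  rw [← mul_one_div, ← rescale_rescale, hscaled, rescale_rescale, mul_one_div_cancel hb.ne',
    rescale_one]

theorem stmt6 (μ : Measure ℝ) (hμ : IsProbabilityMeasure μ) (hnt : NontrivialMeasure μ)
    (hsym : SymmetricMeasure μ) (hws : WeaklyStable μ)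
    (p : ℝ) (hp : p ∈ Set.Ioc (0 : ℝ) 2)
    (lam ν : Measure ℝ)
    (hlam : IsProbabilityMeasure lam) (hν : IsProbabilityMeasure ν)
    (hlamne : lam ≠ Measure.dirac 0) (hνne : ν ≠ Measure.dirac 0)
    (hlam0 : lam (Set.Iio 0) = 0) (hν0 : ν (Set.Iio 0) = 0)
    (hstab1 : ∀ a b : ℝ, 0 < a → 0 < b →
      mconv (rescale a (mix μ lam)) (rescale b (mix μ lam))
        = rescale ((a ^ p + b ^ p) ^ (1 / p)) (mix μ lam))
    (hstab2 : ∀ a b : ℝ, 0 < a → 0 < b →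
      mconv (rescale a (mix μ ν)) (rescale b (mix μ ν))
        = rescale ((a ^ p + b ^ p) ^ (1 / p)) (mix μ ν)) :
    ∃ γ : Measure ℝ, IsProbabilityMeasure γ ∧
      (∀ t : ℝ, charFun' γ t = (Real.exp (-(|t| ^ p)) : ℂ)) ∧
      ∃ a : ℝ, 0 < a ∧ ∃ b : ℝ, 0 < b ∧
        mix μ lam = rescale a γ ∧ mix μ ν = rescale b γ ∧
        rescale (1 / a) lam = rescale (1 / b) ν ∧
        ∃ c : ℝ, 0 < c ∧ ν = rescale c lam :=
  stmt6_general μ hμ hnt hsym p hp lam ν hlam hν hlamne hνne hlam0 hν0 hstab1 hstab2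
end
end

section
/- Let μ be a nontrivial symmetric weakly stable probability measure on ℝ, let λ be μ-weakly infinitely divisible, let {λ^r : r ≥ 0} be a convolution semigroup family for (μ,λ), and let t_n ↘ 0. Then for every a > 0, limsup_{n→∞} t_n^{−1} λ^{t_n}({s : |s| > a}) < ∞. -/
open MeasureTheory Filter Topology ENNReal BoundedContinuousFunction

noncomputable section

/-!
Write `ψ_r(u)` for the characteristic function of `μ ∘ λ^r`. As `μ` is symmetric, so is
`μ ∘ λ^r`, hence `ψ_r` is real; the semigroup property makes `r ↦ ψ_r(u)` multiplicative on
`[0, ∞)`, and weak continuity of `λ^r` at `0` makes it tend to `1`. Such a function is positive and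
nonincreasing, and comparing `t` with `1 / ⌊1 / t⌋` gives `1 - ψ_t(u) ≤ 2 t (-log ψ_1(u))`.

On the other hand, since `μ` has no atom at `0`, the average `∫ sinc (T x) dμ(x)` of its
characteristic function over `[-T, T]` tends to `0`. Averaging over `u ∈ [-b, b]` for `b` large
gives a truncation inequality `λ^t {|s| > a} ≤ b⁻¹ ∫_{-b}^{b} (1 - ψ_t(u)) du ≤ C t`.
-/

open Real

section Mix

variable {μ ν : Measure ℝ}

instance [IsProbabilityMeasure μ] [IsProbabilityMeasure ν] : IsProbabilityMeasure (mix μ ν) :=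
  Measure.isProbabilityMeasure_map (by fun_prop)

lemma integral_mix {E : Type*} [NormedAddCommGroup E] [NormedSpace ℝ E] [SFinite μ] [SFinite ν]
    {f : ℝ → E} (hf : Integrable f (mix μ ν)) :
    ∫ y, f y ∂(mix μ ν) = ∫ s, ∫ x, f (x * s) ∂μ ∂ν := by
  have hmul : AEMeasurable (fun p : ℝ × ℝ => p.1 * p.2) (μ.prod ν) := by fun_prop
  rw [mix, integral_map hmul hf.aestronglyMeasurable]
  exact integral_prod_symm (fun p : ℝ × ℝ => f (p.1 * p.2))
    ((integrable_map_measure hf.aestronglyMeasurable hmul).mp hf)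

lemma charFun_mix_s11 [IsFiniteMeasure μ] [IsFiniteMeasure ν] (u : ℝ) :
    charFun (mix μ ν) u = ∫ s, charFun μ (u * s) ∂ν := by
  have : IsFiniteMeasure (mix μ ν) := Measure.isFiniteMeasure_map _ _
  rw [charFun_apply_real, integral_mix]
  · simp_rw [charFun_apply_real]
    congr! 4 with s x
    push_cast; ring_nf
  · exact (integrable_const (1 : ℝ)).mono (by fun_prop)
      (by simp [← Complex.ofReal_mul, Complex.norm_exp_ofReal_mul_I])

lemma SymmetricMeasure.mix (hμ : SymmetricMeasure μ) [SFinite μ] [SFinite ν] :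
    SymmetricMeasure (mix μ ν) := by
  have hneg : (fun y : ℝ => -1 * y) ∘ (fun p : ℝ × ℝ => p.1 * p.2)
      = (fun p : ℝ × ℝ => p.1 * p.2) ∘ Prod.map (fun x => -1 * x) id := by
    ext p; simp
  rw [SymmetricMeasure, rescale, _root_.mix, Measure.map_map (by fun_prop) (by fun_prop), hneg,
    ← Measure.map_map (by fun_prop : Measurable fun p : ℝ × ℝ => p.1 * p.2)
      (by fun_prop : Measurable (Prod.map (fun x : ℝ => -1 * x) id)),
    ← Measure.map_prod_map μ ν (by fun_prop : Measurable fun x : ℝ => -1 * x) measurable_id,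
    Measure.map_id]
  exact congrArg (_root_.mix · ν) hμ

end Mix

lemma SymmetricMeasure.ofReal_re_charFun {ν : Measure ℝ} (hν : SymmetricMeasure ν) (u : ℝ) :
    ((charFun ν u).re : ℂ) = charFun ν u := by
  rw [← Complex.conj_eq_iff_re, ← charFun_neg]
  conv_rhs => rw [← hν, rescale, charFun_map_mul, neg_one_mul]

lemma abs_sinc_le_inv_abs {y : ℝ} (hy : y ≠ 0) : |sinc y| ≤ |y|⁻¹ := by
  rw [sinc_of_ne_zero hy, abs_div, div_eq_mul_inv]
  exact mul_le_of_le_one_left (by positivity) (abs_sin_le_one y)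

lemma tendsto_sinc_mul_atTop {x : ℝ} (hx : x ≠ 0) :
    Tendsto (fun T => sinc (T * x)) atTop (𝓝 0) := by
  refine squeeze_zero_norm' ?_ (tendsto_inv_atTop_zero.comp
    (tendsto_id.atTop_mul_const (abs_pos.mpr hx)))
  filter_upwards [eventually_gt_atTop 0] with T hT
  simpa [abs_mul, abs_of_pos hT] using abs_sinc_le_inv_abs (mul_ne_zero hT.ne' hx)

section SincIntegral

variable {μ : Measure ℝ}

lemma tendsto_integral_sinc_mul_atTop [IsFiniteMeasure μ] (hμ0 : μ {0} = 0) :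
    Tendsto (fun T => ∫ x, sinc (T * x) ∂μ) atTop (𝓝 0) := by
  have hae : ∀ᵐ x ∂μ, x ≠ 0 := measure_eq_zero_iff_ae_notMem.mp hμ0
  simpa using tendsto_integral_filter_of_dominated_convergence (fun _ => (1 : ℝ))
    (Eventually.of_forall fun T => by fun_prop)
    (Eventually.of_forall fun T => ae_of_all _ fun x => abs_sinc_le_one _) (integrable_const 1)
    (hae.mono fun x hx => tendsto_sinc_mul_atTop hx)

lemma exists_integral_sinc_mul_le_half [IsFiniteMeasure μ] (hμ0 : μ {0} = 0) :
    ∃ T₀ > 0, ∀ T, T₀ ≤ |T| → ∫ x, sinc (T * x) ∂μ ≤ 1 / 2 := by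
  obtain ⟨T₁, hT₁⟩ := eventually_atTop.mp
    ((tendsto_integral_sinc_mul_atTop hμ0).eventually_le_const (by norm_num : (0 : ℝ) < 1 / 2))
  refine ⟨max T₁ 1, by positivity, fun T hT => ?_⟩
  have hsinc_abs : ∫ x, sinc (T * x) ∂μ = ∫ x, sinc (|T| * x) ∂μ := by
    rcases abs_choice T with h | h
    · rw [h]
    · simp_rw [h, neg_mul, sinc_neg]
  exact hsinc_abs ▸ hT₁ _ (le_of_max_le_left hT)

variable (μ) in
lemma continuous_integral_sinc_mul [IsFiniteMeasure μ] :
    Continuous fun T => ∫ x, sinc (T * x) ∂μ :=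
  continuous_of_dominated (fun T => by fun_prop) (fun T => ae_of_all _ fun x => abs_sinc_le_one _)
    (integrable_const 1) (ae_of_all _ fun x => by fun_prop)

variable (μ) in
lemma abs_integral_sinc_mul_le_one [IsProbabilityMeasure μ] (T : ℝ) :
    |∫ x, sinc (T * x) ∂μ| ≤ 1 := by
  simpa using norm_integral_le_of_norm_le_const (μ := μ) (f := fun x => sinc (T * x)) (C := 1)
    (ae_of_all _ fun x => abs_sinc_le_one (T * x))

end SincIntegral

lemma integral_charFun_mix_Icc {μ ν : Measure ℝ} [IsFiniteMeasure μ] [IsFiniteMeasure ν]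
    {b : ℝ} (hb : 0 < b) :
    ∫ u in -b..b, charFun (mix μ ν) u = 2 * b * ∫ s, ∫ x, sinc (b * s * x) ∂μ ∂ν := by
  have : IsFiniteMeasure (mix μ ν) := Measure.isFiniteMeasure_map _ _
  rw [integral_charFun_Icc hb,
    integral_mix (Integrable.of_bound (by fun_prop) 1 (ae_of_all _ fun y => abs_sinc_le_one _))]
  simp_rw [show ∀ x s : ℝ, b * (x * s) = b * s * x from fun x s => by ring]

lemma exists_measureReal_abs_gt_le_integral_charFun_mix {μ : Measure ℝ} [IsProbabilityMeasure μ]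
    (hμ0 : μ {0} = 0) {a : ℝ} (ha : 0 < a) :
    ∃ b > 0, ∀ (ν : Measure ℝ) [IsProbabilityMeasure ν],
      ν.real {s | a < |s|} ≤ b⁻¹ * ‖∫ u in -b..b, 1 - charFun (mix μ ν) u‖ := by
  obtain ⟨T₀, hT₀, hsinc⟩ := exists_integral_sinc_mul_le_half hμ0
  have hb : 0 < T₀ / a := by positivity
  refine ⟨T₀ / a, hb, fun ν _ => ?_⟩
  set b := T₀ / a
  -- `K s` is the average of `u ↦ charFun μ (u * s)` over `[-b, b]`
  set K : ℝ → ℝ := fun s => ∫ x, sinc (b * s * x) ∂μ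
  have hK_int : Integrable K ν :=
    Integrable.of_bound ((continuous_integral_sinc_mul μ).comp
      (continuous_const.mul continuous_id)).aestronglyMeasurable 1
      (ae_of_all _ fun s => abs_integral_sinc_mul_le_one μ _)
  have hK_int' : Integrable (fun s => 2 * (1 - K s)) ν :=
    ((integrable_const 1).sub hK_int).const_mul 2
  have hK_half : ∀ s ∈ {s | a < |s|}, (1 : ℝ) ≤ 2 * (1 - K s) := by
    intro s hs
    have : T₀ ≤ |b * s| := by
      rw [abs_mul, abs_of_pos hb]
      calc T₀ = b * a := (div_mul_cancel₀ T₀ ha.ne').symm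
        _ ≤ b * |s| := by gcongr; exact hs.le
    linarith [hsinc _ this]
  have hident : ∫ u in -b..b, 1 - charFun (mix μ ν) u = ((2 * b * ∫ s, (1 - K s) ∂ν : ℝ) : ℂ) := by
    rw [intervalIntegral.integral_sub intervalIntegrable_const intervalIntegrable_charFun,
      integral_charFun_mix_Icc hb, integral_sub (integrable_const 1) hK_int]
    simp only [intervalIntegral.integral_const, integral_const, probReal_univ,
      Complex.real_smul, smul_eq_mul]
    push_cast
    ring
  calc ν.real {s | a < |s|} = ∫ s in {s | a < |s|}, 1 ∂ν := by simp
    _ ≤ ∫ s in {s | a < |s|}, 2 * (1 - K s) ∂ν :=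
      setIntegral_mono_on (integrable_const _).integrableOn hK_int'.integrableOn
        (measurableSet_lt measurable_const measurable_abs) hK_half
    _ ≤ ∫ s, 2 * (1 - K s) ∂ν :=
      setIntegral_le_integral hK_int' (ae_of_all _ fun s => by
        show (0 : ℝ) ≤ 2 * (1 - K s)
        linarith [(abs_le.mp (abs_integral_sinc_mul_le_one μ (b * s))).2])
    _ = b⁻¹ * (2 * b * ∫ s, (1 - K s) ∂ν) := by rw [integral_const_mul]; field_simp
    _ ≤ b⁻¹ * ‖∫ u in -b..b, 1 - charFun (mix μ ν) u‖ := by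
      rw [hident, Complex.norm_real]
      gcongr
      exact Real.le_norm_self _

def IsMulOnNonneg (f : ℝ → ℝ) : Prop := ∀ r s, 0 ≤ r → 0 ≤ s → f (r + s) = f r * f s

namespace IsMulOnNonneg

variable {f : ℝ → ℝ}

lemma map_zero (hf : IsMulOnNonneg f) (htend : Tendsto f (𝓝[>] 0) (𝓝 1)) : f 0 = 1 := by
  obtain ⟨r, hfr, hr⟩ := ((htend.eventually_ne one_ne_zero).and self_mem_nhdsWithin).exists
  exact mul_left_cancel₀ hfr (by rw [mul_one, ← hf r 0 (le_of_lt hr) le_rfl, add_zero])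

lemma map_nat_mul (hf : IsMulOnNonneg f) (h0 : f 0 = 1) {x : ℝ} (hx : 0 ≤ x) (n : ℕ) :
    f (n * x) = f x ^ n := by
  induction n with
  | zero => simpa using h0
  | succ n ih => rw [Nat.cast_succ, add_one_mul, hf _ _ (by positivity) hx, ih, pow_succ]

lemma pos (hf : IsMulOnNonneg f) (htend : Tendsto f (𝓝[>] 0) (𝓝 1)) {r : ℝ} (hr : 0 ≤ r) :
    0 < f r := by
  rcases hr.eq_or_lt with rfl | hr
  · exact hf.map_zero htend ▸ one_pos
  have hdiv : Tendsto (fun n : ℕ => r / n) atTop (𝓝[>] 0) :=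
    tendsto_nhdsWithin_iff.mpr ⟨tendsto_const_div_atTop_nhds_zero_nat r,
      (eventually_gt_atTop 0).mono fun n hn => div_pos hr (Nat.cast_pos.mpr hn)⟩
  obtain ⟨n, hfn, hn⟩ := (((htend.comp hdiv).eventually (eventually_gt_nhds one_pos)).and
    (eventually_gt_atTop 0)).exists
  rw [← mul_div_cancel₀ r (Nat.cast_pos.mpr hn).ne', hf.map_nat_mul (hf.map_zero htend)
    (by positivity)]
  exact pow_pos hfn n

lemma antitoneOn (hf : IsMulOnNonneg f) (hle : ∀ r, 0 ≤ r → f r ≤ 1)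
    (htend : Tendsto f (𝓝[>] 0) (𝓝 1)) : AntitoneOn f (Set.Ici 0) := by
  intro r hr s _ hrs
  rw [show s = r + (s - r) by ring, hf r _ hr (sub_nonneg.mpr hrs)]
  exact mul_le_of_le_one_right (hf.pos htend hr).le (hle _ (sub_nonneg.mpr hrs))

lemma one_sub_le (hf : IsMulOnNonneg f) (hle : ∀ r, 0 ≤ r → f r ≤ 1)
    (htend : Tendsto f (𝓝[>] 0) (𝓝 1)) {t : ℝ} (ht : 0 < t) (ht1 : t ≤ 1) :
    1 - f t ≤ 2 * t * -log (f 1) := by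
  -- compare `t` with `1 / m` for `m = ⌊1 / t⌋`, where `t ≤ 1 / m ≤ 2 * t`
  set m := ⌊1 / t⌋₊
  have hm : (1 : ℝ) ≤ m := by
    exact_mod_cast Nat.le_floor (by rw [Nat.cast_one, le_div_iff₀ ht]; linarith)
  have htm : t ≤ 1 / m := by
    rw [le_div_iff₀ (by positivity), ← le_div_iff₀' ht]
    exact Nat.floor_le (by positivity)
  have hm2t : 1 / (m : ℝ) ≤ 2 * t := by
    have : 1 / t < m + 1 := Nat.lt_floor_add_one _
    rw [div_lt_iff₀ ht] at this
    rw [div_le_iff₀ (by positivity)]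
    nlinarith
  have hpos : 0 < f (1 / m) := hf.pos htend (by positivity)
  have hpow : f (1 / m) ^ m = f 1 := by
    rw [← hf.map_nat_mul (hf.map_zero htend) (by positivity), mul_one_div_cancel (by positivity)]
  have hlog : 0 ≤ -log (f 1) :=
    neg_nonneg.mpr (log_nonpos (hf.pos htend zero_le_one).le (hle 1 zero_le_one))
  calc 1 - f t ≤ 1 - f (1 / m) :=
        sub_le_sub_left (hf.antitoneOn hle htend (Set.mem_Ici.mpr ht.le)
          (Set.mem_Ici.mpr (by positivity)) htm) 1
    _ ≤ -log (f (1 / m)) := by linarith [log_le_sub_one_of_pos hpos]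
    _ = 1 / m * -log (f 1) := by rw [← hpow, Real.log_pow]; field_simp
    _ ≤ 2 * t * -log (f 1) := mul_le_mul_of_nonneg_right hm2t hlog

end IsMulOnNonneg

namespace ConvSemigroupFamily

variable {μ lam : Measure ℝ} {L : ℝ → Measure ℝ}

lemma isProbabilityMeasure (hL : ConvSemigroupFamily μ lam L) {r : ℝ} (hr : 0 ≤ r) :
    IsProbabilityMeasure (L r) :=
  hL.1 r hr

lemma mconv_mix (hL : ConvSemigroupFamily μ lam L) {r s : ℝ} (hr : 0 ≤ r) (hs : 0 ≤ s) :
    mconv (mix μ (L r)) (mix μ (L s)) = mix μ (L (r + s)) :=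
  hL.2.2.2.1 r s hr hs

lemma tendsto_integral (hL : ConvSemigroupFamily μ lam L) (f : ℝ →ᵇ ℝ) :
    Tendsto (fun r => ∫ x, f x ∂(L r)) (𝓝[>] 0) (𝓝 (f 0)) :=
  hL.2.2.2.2 f

variable [IsProbabilityMeasure μ]

lemma ofReal_re_charFun_mix (hL : ConvSemigroupFamily μ lam L) (hsym : SymmetricMeasure μ)
    {r : ℝ} (hr : 0 ≤ r) (u : ℝ) :
    ((charFun (mix μ (L r)) u).re : ℂ) = charFun (mix μ (L r)) u :=
  have := hL.isProbabilityMeasure hr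
  (hsym.mix (ν := L r)).ofReal_re_charFun u

lemma isMulOnNonneg_re_charFun_mix (hL : ConvSemigroupFamily μ lam L)
    (hsym : SymmetricMeasure μ) (u : ℝ) :
    IsMulOnNonneg fun r => (charFun (mix μ (L r)) u).re := by
  intro r s hr hs
  have := hL.isProbabilityMeasure hr
  have := hL.isProbabilityMeasure hs
  have hconv : charFun (mix μ (L (r + s))) u
      = charFun (mix μ (L r)) u * charFun (mix μ (L s)) u := by
    rw [← hL.mconv_mix hr hs]
    exact charFun_conv u
  rw [← hL.ofReal_re_charFun_mix hsym hr, ← hL.ofReal_re_charFun_mix hsym hs,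
    ← hL.ofReal_re_charFun_mix hsym (add_nonneg hr hs)] at hconv
  exact_mod_cast hconv

lemma re_charFun_mix_le_one (hL : ConvSemigroupFamily μ lam L) {r : ℝ} (hr : 0 ≤ r) (u : ℝ) :
    (charFun (mix μ (L r)) u).re ≤ 1 :=
  have := hL.isProbabilityMeasure hr
  (Complex.re_le_norm _).trans (norm_charFun_le_one u)

lemma tendsto_re_charFun_mix (hL : ConvSemigroupFamily μ lam L) (u : ℝ) :
    Tendsto (fun r => (charFun (mix μ (L r)) u).re) (𝓝[>] 0) (𝓝 1) := by
  let g : ℝ →ᵇ ℝ := .ofNormedAddCommGroup (fun s => (charFun μ (u * s)).re) (by fun_prop) 1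
    fun s => (Complex.abs_re_le_norm _).trans (norm_charFun_le_one _)
  have hg0 : g 0 = 1 := by simp [g]
  refine hg0 ▸ (hL.tendsto_integral g).congr' ?_
  filter_upwards [self_mem_nhdsWithin] with r hr
  have := hL.isProbabilityMeasure (le_of_lt hr)
  rw [charFun_mix_s11]
  exact integral_re (Integrable.of_bound (by fun_prop) 1
    (ae_of_all _ fun s => norm_charFun_le_one _))

lemma norm_one_sub_charFun_mix_le (hL : ConvSemigroupFamily μ lam L) (hsym : SymmetricMeasure μ)
    {t : ℝ} (ht : 0 < t) (ht1 : t ≤ 1) (u : ℝ) :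
    ‖1 - charFun (mix μ (L t)) u‖ ≤ 2 * t * -log (charFun (mix μ (L 1)) u).re := by
  rw [← hL.ofReal_re_charFun_mix hsym ht.le, ← Complex.ofReal_one, ← Complex.ofReal_sub,
    Complex.norm_real, Real.norm_of_nonneg (sub_nonneg.mpr (hL.re_charFun_mix_le_one ht.le u))]
  exact (hL.isMulOnNonneg_re_charFun_mix hsym u).one_sub_le
    (fun _ hr => hL.re_charFun_mix_le_one hr u) (hL.tendsto_re_charFun_mix u) ht ht1

lemma exists_measureReal_abs_gt_le_mul (hL : ConvSemigroupFamily μ lam L)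
    (hsym : SymmetricMeasure μ) (hμ0 : μ {0} = 0) {a : ℝ} (ha : 0 < a) :
    ∃ C, ∀ t, 0 < t → t ≤ 1 → (L t).real {s | a < |s|} ≤ C * t := by
  obtain ⟨b, hb, htrunc⟩ := exists_measureReal_abs_gt_le_integral_charFun_mix hμ0 ha
  set c : ℝ → ℝ := fun u => -log (charFun (mix μ (L 1)) u).re
  have hc : Continuous c := by
    have := hL.isProbabilityMeasure zero_le_one
    exact ((by fun_prop : Continuous fun u => (charFun (mix μ (L 1)) u).re).log fun u =>
      ((hL.isMulOnNonneg_re_charFun_mix hsym u).pos (hL.tendsto_re_charFun_mix u)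
        zero_le_one).ne').neg
  refine ⟨b⁻¹ * ∫ u in -b..b, 2 * c u, fun t ht ht1 => ?_⟩
  have := hL.isProbabilityMeasure ht.le
  calc (L t).real {s | a < |s|}
      ≤ b⁻¹ * ‖∫ u in -b..b, 1 - charFun (mix μ (L t)) u‖ := htrunc (L t)
    _ ≤ b⁻¹ * ∫ u in -b..b, 2 * t * c u := by
      gcongr
      exact intervalIntegral.norm_integral_le_of_norm_le (by linarith)
        (ae_of_all _ fun u _ => hL.norm_one_sub_charFun_mix_le hsym ht ht1 u)
        ((continuous_const.mul hc).intervalIntegrable _ _)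
    _ = (b⁻¹ * ∫ u in -b..b, 2 * c u) * t := by
      simp_rw [mul_right_comm (2 : ℝ) t, intervalIntegral.integral_mul_const]
      ring

end ConvSemigroupFamily

theorem stmt11_general (μ lam : Measure ℝ)
    (hμ : IsProbabilityMeasure μ) (hnt : NontrivialMeasure μ)
    (hsym : SymmetricMeasure μ)
    (L : ℝ → Measure ℝ) (hL : ConvSemigroupFamily μ lam L)
    (t : ℕ → ℝ) (htpos : ∀ n, 0 < t n)
    (ht0 : Tendsto t atTop (𝓝 0)) :
    ∀ a : ℝ, 0 < a →
      atTop.limsup (fun n => (L (t n)) {s : ℝ | a < |s|} / ENNReal.ofReal (t n)) < ∞ := by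
  intro a ha
  obtain ⟨C, hC⟩ := hL.exists_measureReal_abs_gt_le_mul hsym (hnt 0) ha
  refine (limsup_le_of_le (by isBoundedDefault) ?_).trans_lt (ofReal_lt_top (r := C))
  filter_upwards [ht0.eventually_le_const zero_lt_one] with n hn
  have := hL.isProbabilityMeasure (htpos n).le
  rw [ENNReal.div_le_iff (ofReal_pos.mpr (htpos n)).ne' ofReal_ne_top, ← ofReal_measureReal,
    ← ofReal_mul' (htpos n).le]
  exact ofReal_le_ofReal (hC _ (htpos n) hn)

theorem stmt11 (μ lam : Measure ℝ)
    (hμ : IsProbabilityMeasure μ) (hnt : NontrivialMeasure μ)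
    (hsym : SymmetricMeasure μ) (hws : WeaklyStable μ)
    (hlam : IsProbabilityMeasure lam) (hdiv : MuWeaklyInfDiv μ lam)
    (L : ℝ → Measure ℝ) (hL : ConvSemigroupFamily μ lam L)
    (t : ℕ → ℝ) (htpos : ∀ n, 0 < t n) (htanti : StrictAnti t)
    (ht0 : Tendsto t atTop (𝓝 0)) :
    ∀ a : ℝ, 0 < a →
      atTop.limsup (fun n => (L (t n)) {s : ℝ | a < |s|} / ENNReal.ofReal (t n)) < ∞ :=
  stmt11_general μ lam hμ hnt hsym L hL t htpos ht0
end
end
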